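/- arXiv:2512.15890 — 2 statements merged into one kernel-verified Lean document; each statement's English description precedes it below -/
import Mathlib

section
/- Let L = 2N and let Φ be an N×L complex matrix that is separable with respect to a bipartition G ⊔ G^c = {1,…,L} with occupation k, i.e. there exists 1 ≤ k ≤ N − 1 such that rows 1,…,k of Φ vanish on all columns in G^c and rows k+1,…,N vanish on all columns in G. Let A_L ⊆ {1,…,L} with |A_L| = N, set A_R = {1,…,L} \ A_L, T = G ∩ A_L, and T^c = G^c ∩ A_L. If det(Φ_{A_L}) ≠ 0 and det(Φ_{A_R}) ≠ 0, then |G| and |G^c| are even, k = |G|/2, N − k = |G^c|/2, |T| = |G|/2, and |T^c| = |G^c|/2. -/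
open Matrix

/-- The square `N × N` submatrix of `Φ` consisting of the columns indexed by a subset
`S` of cardinality `N`, taken in increasing order; its determinant is the Slater
determinant of `S`. -/
noncomputable def sqCols {N L : ℕ} (Φ : Matrix (Fin N) (Fin L) ℂ) (S : Finset (Fin L))
    (h : S.card = N) : Matrix (Fin N) (Fin N) ℂ :=
  Φ.submatrix id (fun j => (S.orderIsoOfFin h j : Fin L))
lemma aux_card_le {N : ℕ} (M : Matrix (Fin N) (Fin N) ℂ) (R S : Finset (Fin N))
    (hz : ∀ j ∈ S, ∀ i ∉ R, M i j = 0) (hdet : M.det ≠ 0) : S.card ≤ R.card := by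
  have hunit : IsUnit M := (Matrix.isUnit_iff_isUnit_det M).2 (isUnit_iff_ne_zero.2 hdet)
  have hcols : LinearIndependent ℂ (fun j ↦ Mᵀ j) :=
    Matrix.linearIndependent_cols_iff_isUnit.2 hunit
  have hres : LinearIndependent ℂ (fun j : ↥S ↦ Mᵀ (j : Fin N)) :=
    hcols.comp _ Subtype.val_injective
  set w : ↥S → (↥R → ℂ) := fun j i ↦ M (i : Fin N) (j : Fin N) with hw
  have hwind : LinearIndependent ℂ w := by
    rw [Fintype.linearIndependent_iff] at hres ⊢
    intro g hg
    apply hres g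
    funext i
    by_cases hi : i ∈ R
    · have := congrFun hg ⟨i, hi⟩
      simpa using this
    · simp only [Finset.sum_apply, Pi.smul_apply, Matrix.transpose_apply, Pi.zero_apply]
      refine Finset.sum_eq_zero fun j _ ↦ ?_
      rw [hz j j.2 i hi, smul_zero]
  have := hwind.fintype_card_le_finrank
  simpa using this

lemma card_filter_orderIso {N L : ℕ} (A : Finset (Fin L)) (hA : A.card = N)
    (G : Finset (Fin L)) :
    (Finset.univ.filter
      (fun j : Fin N => ((A.orderIsoOfFin hA j : Fin L) ∈ G))).card = (G ∩ A).card := by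
  apply Finset.card_bij (fun j _ => (A.orderIsoOfFin hA j : Fin L))
  · intro j hj
    simp only [Finset.mem_filter] at hj
    exact Finset.mem_inter.2 ⟨hj.2, (A.orderIsoOfFin hA j).2⟩
  · intro a ha b hb hab
    exact (A.orderIsoOfFin hA).injective (Subtype.val_injective hab)
  · intro x hx
    rcases Finset.mem_inter.1 hx with ⟨hxG, hxA⟩
    refine ⟨(A.orderIsoOfFin hA).symm ⟨x, hxA⟩, ?_, ?_⟩
    · rw [Finset.mem_filter]
      refine ⟨Finset.mem_univ _, ?_⟩
      rw [OrderIso.apply_symm_apply]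
      exact hxG
    · rw [OrderIso.apply_symm_apply]

lemma card_filter_lt (N k : ℕ) (hk : k ≤ N) :
    (Finset.univ.filter (fun i : Fin N => (i : ℕ) < k)).card = k := by
  have : (Finset.univ.filter (fun i : Fin N => (i : ℕ) < k)) =
      (Finset.range k).attachFin (fun m hm => lt_of_lt_of_le (Finset.mem_range.1 hm) hk) := by
    ext i
    simp [Finset.mem_attachFin]
  rw [this, Finset.card_attachFin, Finset.card_range]

lemma main_bound {N k : ℕ} (Φ : Matrix (Fin N) (Fin (2 * N)) ℂ)
    (G : Finset (Fin (2 * N))) (hk2 : k ≤ N)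
    (hsep₁ : ∀ (i : Fin N) (j : Fin (2 * N)), (i : ℕ) < k → j ∈ Gᶜ → Φ i j = 0)
    (hsep₂ : ∀ (i : Fin N) (j : Fin (2 * N)), k ≤ (i : ℕ) → j ∈ G → Φ i j = 0)
    (A : Finset (Fin (2 * N))) (hA : A.card = N)
    (hdetA : (sqCols Φ A hA).det ≠ 0) :
    (G ∩ A).card ≤ k ∧ (Gᶜ ∩ A).card ≤ N - k := by
  constructor
  · rw [← card_filter_orderIso A hA G, ← card_filter_lt N k hk2]
    apply aux_card_le (sqCols Φ A hA)
    · intro j hj i hi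
      simp only [Finset.mem_filter, Finset.mem_univ, true_and, not_lt] at hj hi
      exact hsep₂ i _ hi hj
    · exact hdetA
  · rw [← card_filter_orderIso A hA Gᶜ]
    have hcard : (Finset.univ.filter (fun i : Fin N => ¬ (i : ℕ) < k)).card = N - k := by
      have := Finset.card_filter_add_card_filter_not
        (s := (Finset.univ : Finset (Fin N))) (p := fun i : Fin N => (i : ℕ) < k)
      rw [card_filter_lt N k hk2, Finset.card_univ, Fintype.card_fin] at this
      omega
    rw [← hcard]
    apply aux_card_le (sqCols Φ A hA)
    · intro j hj i hi
      simp only [Finset.mem_filter, Finset.mem_univ, true_and, not_not, not_lt] at hj hi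
      exact hsep₁ i _ (by omega) hj
    · exact hdetA


/-- suppose `L = 2N` and `Φ` is separable with respect to the
bipartition `G ⊔ Gᶜ` with occupation `k` (`1 ≤ k ≤ N − 1`): rows `1,…,k`
vanish on all columns in `Gᶜ`, and rows `k+1,…,N` vanish on all columns in `G`.
Let `|A_L| = N`, `A_R = A_Lᶜ`, `T = G ∩ A_L`, `T^c = Gᶜ ∩ A_L`.
If the Slater determinants of `A_L` and `A_R` are both nonzero, then `|G|` and
`|Gᶜ|` are even, `k = |G|/2`, `N − k = |Gᶜ|/2`, `|T| = |G|/2` and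
`|T^c| = |Gᶜ|/2`. -/
theorem separable_nonzero_slater {N k : ℕ} (Φ : Matrix (Fin N) (Fin (2 * N)) ℂ)
    (G : Finset (Fin (2 * N)))
    (hk1 : 1 ≤ k) (hk2 : k + 1 ≤ N)
    (hsep₁ : ∀ (i : Fin N) (j : Fin (2 * N)), (i : ℕ) < k → j ∈ Gᶜ → Φ i j = 0)
    (hsep₂ : ∀ (i : Fin N) (j : Fin (2 * N)), k ≤ (i : ℕ) → j ∈ G → Φ i j = 0)
    (A : Finset (Fin (2 * N))) (hA : A.card = N)
    (hdetA : (sqCols Φ A hA).det ≠ 0)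
    (hdetAc : (sqCols Φ Aᶜ
        (by rw [Finset.card_compl, hA, Fintype.card_fin]; omega)).det ≠ 0) :
    Even G.card ∧ Even Gᶜ.card ∧
    2 * k = G.card ∧ 2 * (N - k) = Gᶜ.card ∧
    2 * (G ∩ A).card = G.card ∧ 2 * (Gᶜ ∩ A).card = Gᶜ.card := by
  have h1 := main_bound Φ G (by omega) hsep₁ hsep₂ A hA hdetA
  have h2 := main_bound Φ G (by omega) hsep₁ hsep₂ Aᶜ
    (by rw [Finset.card_compl, hA, Fintype.card_fin]; omega) hdetAc
  have inter_split : ∀ S : Finset (Fin (2 * N)), (G ∩ S).card + (Gᶜ ∩ S).card = S.card := by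
    intro S
    rw [Finset.inter_comm, Finset.inter_comm Gᶜ S, ← Finset.sdiff_eq_inter_compl]
    exact Finset.card_inter_add_card_sdiff S G
  have hsA := inter_split A
  have hsAc := inter_split Aᶜ
  have hAc : Aᶜ.card = N := by rw [Finset.card_compl, hA, Fintype.card_fin]; omega
  have hG : (G ∩ A).card + (G ∩ Aᶜ).card = G.card := by
    rw [← Finset.sdiff_eq_inter_compl]
    exact Finset.card_inter_add_card_sdiff G A
  have hGc : (Gᶜ ∩ A).card + (Gᶜ ∩ Aᶜ).card = Gᶜ.card := by
    rw [← Finset.sdiff_eq_inter_compl]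
    exact Finset.card_inter_add_card_sdiff Gᶜ A
  obtain ⟨h1a, h1b⟩ := h1
  obtain ⟨h2a, h2b⟩ := h2
  rw [hA] at hsA
  rw [hAc] at hsAc
  refine ⟨⟨k, by omega⟩, ⟨N - k, by omega⟩, by omega, by omega, by omega, by omega⟩
end

section
/- (Single-column Plücker relation.) Let Φ be an N×L complex matrix, let A = {i₁ < ⋯ < i_{N−1}} ⊆ {1,…,L}, and let B = {j₁ < ⋯ < j_{N+1}} ⊆ {1,…,L}. Then Σ_{l=1}^{N+1} (−1)^l · det(Φ_{(i₁,…,i_{N−1}, j_l)}) · det(Φ_{B \ {j_l}}) = 0, where Φ_{(i₁,…,i_{N−1}, j_l)} is the N×N matrix whose columns are the columns i₁,…,i_{N−1} of Φ in that order followed by column j_l, and Φ_{B \ {j_l}} uses the increasing enumeration of B \ {j_l}. -/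
open Matrix

/-- The `N × N` matrix whose `m`-th column is the column of `Φ` indexed by the
`m`-th entry of the list `lst` (columns beyond the length of the list are padded
with zeros; no padding occurs when `lst` has length `N`). -/
def listMat {N L : ℕ} (Φ : Matrix (Fin N) (Fin L) ℂ) (lst : List (Fin L)) :
    Matrix (Fin N) (Fin N) ℂ :=
  fun i m => if h : (m : ℕ) < lst.length then Φ i (lst.get ⟨m, h⟩) else 0

theorem aux_plucker {n L : ℕ} (Φ : Matrix (Fin (n + 1)) (Fin L) ℂ)
    (A B : Finset (Fin L)) (hA : A.card = n) (hB : B.card = n + 1 + 1) :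
    ∑ l : Fin (n + 1 + 1),
      (-1 : ℂ) ^ ((l : ℕ) + 1) *
        (listMat Φ (A.sort (· ≤ ·) ++ [(B.orderIsoOfFin hB l : Fin L)])).det *
        (listMat Φ ((B.erase (B.orderIsoOfFin hB l : Fin L)).sort (· ≤ ·))).det
      = 0 := by
  set f : Fin (n + 1 + 1) → Fin L := fun l => B.orderEmbOfFin hB l with hf
  have hAlen : (A.sort (· ≤ ·)).length = n := by rw [Finset.length_sort, hA]
  -- the base matrix
  set M : Matrix (Fin (n + 1)) (Fin (n + 1)) ℂ :=
    listMat Φ (A.sort (· ≤ ·) ++ [f 0]) with hM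
  -- column decomposition
  have col : ∀ x : Fin L, listMat Φ (A.sort (· ≤ ·) ++ [x]) =
      M.updateCol (Fin.last n) (fun i => Φ i x) := by
    intro x
    have hlen1 : (A.sort (· ≤ ·) ++ [x]).length = n + 1 := by simp [hAlen]
    have hlen0 : (A.sort (· ≤ ·) ++ [f 0]).length = n + 1 := by simp [hAlen]
    funext i m
    simp only [hM, listMat, updateCol_apply, hlen1, hlen0, m.isLt, dif_pos]
    by_cases hm : m = Fin.last n
    · subst hm
      rw [if_pos rfl, List.get_eq_getElem, List.getElem_append_right (by simp only [Fin.val_mk, Fin.val_last]; omega)]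
      simp [hAlen]
    · have hmlt : (m : ℕ) < n := by
        have h1 := m.isLt
        have h2 : (m : ℕ) ≠ n := fun h => hm (Fin.ext h)
        omega
      rw [if_neg hm, List.get_eq_getElem, List.get_eq_getElem,
        List.getElem_append_left (by simp only [Fin.val_mk]; omega), List.getElem_append_left (by simp only [Fin.val_mk]; omega)]
  -- determinant via cramer
  have detcol : ∀ x : Fin L, (listMat Φ (A.sort (· ≤ ·) ++ [x])).det =
      cramer M (fun i => Φ i x) (Fin.last n) := by
    intro x
    rw [col x, cramer_apply]
  -- the erase matrices
  have hmemf : ∀ l, f l ∈ B := fun l => B.orderEmbOfFin_mem hB l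
  have hBe : ∀ l : Fin (n + 1 + 1), (B.erase (f l)).card = n + 1 := by
    intro l
    rw [Finset.card_erase_of_mem (hmemf l), hB]
    omega
  have eraseEmb : ∀ l : Fin (n + 1 + 1), ∀ m : Fin (n + 1),
      (B.erase (f l)).orderEmbOfFin (hBe l) m = f (l.succAbove m) := by
    intro l
    have := Finset.orderEmbOfFin_unique (hBe l)
      (f := fun m => f (l.succAbove m))
      (fun m => Finset.mem_erase.2 ⟨fun h => Fin.succAbove_ne l m
        ((B.orderEmbOfFin hB).injective h), hmemf _⟩)
      ((B.orderEmbOfFin hB).strictMono.comp (Fin.strictMono_succAbove l))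
    intro m
    exact (congrFun this m).symm
  have eraseMat : ∀ l : Fin (n + 1 + 1),
      listMat Φ ((B.erase (f l)).sort (· ≤ ·)) =
      Matrix.of (fun k m => Φ k (f (l.succAbove m))) := by
    intro l
    funext k m
    have hlen : ((B.erase (f l)).sort (· ≤ ·)).length = n + 1 := by
      rw [Finset.length_sort, hBe l]
    simp only [listMat, Matrix.of_apply]
    rw [dif_pos (by omega)]
    congr 1
    have := eraseEmb l m
    rw [Finset.orderEmbOfFin_apply] at this
    rw [List.get_eq_getElem]
    convert this using 2
    rfl
  -- the row-duplication identity
  have rowdup : ∀ i : Fin (n + 1),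
      ∑ l : Fin (n + 1 + 1), (-1 : ℂ) ^ (l : ℕ) * Φ i (f l) *
        (Matrix.of (fun k m => Φ k (f (l.succAbove m)))).det = 0 := by
    intro i
    set C : Matrix (Fin (n + 1 + 1)) (Fin (n + 1 + 1)) ℂ :=
      Matrix.of (Fin.cons (fun l => Φ i (f l)) (fun k l => Φ k (f l))) with hC
    have hdet : C.det = 0 := by
      apply det_zero_of_row_eq (i := 0) (j := i.succ)
      · exact (Fin.succ_ne_zero i).symm
      · funext l
        simp [hC]
    rw [det_succ_row_zero] at hdet
    rw [← hdet]
    apply Finset.sum_congr rfl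
    intro l _
    have h0 : C 0 l = Φ i (f l) := by simp [hC]
    have hsub : C.submatrix Fin.succ l.succAbove =
        Matrix.of (fun k m => Φ k (f (l.succAbove m))) := by
      funext k m
      simp [hC, Matrix.submatrix_apply]
    rw [h0, hsub]
  -- combine
  have key : ∀ l : Fin (n + 1 + 1),
      (-1 : ℂ) ^ ((l : ℕ) + 1) *
        (listMat Φ (A.sort (· ≤ ·) ++ [(B.orderIsoOfFin hB l : Fin L)])).det *
        (listMat Φ ((B.erase (B.orderIsoOfFin hB l : Fin L)).sort (· ≤ ·))).det
      = cramer M ((((-1 : ℂ) ^ ((l : ℕ) + 1) *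
          (Matrix.of (fun k m => Φ k (f (l.succAbove m)))).det)) •
          (fun i => Φ i (f l))) (Fin.last n) := by
    intro l
    have hfl : (B.orderIsoOfFin hB l : Fin L) = f l := rfl
    rw [hfl, detcol, eraseMat l, LinearMap.map_smul]
    simp only [Pi.smul_apply, smul_eq_mul]
    ring
  rw [Finset.sum_congr rfl (fun l _ => key l), ← Finset.sum_apply, ← map_sum]
  have : (∑ l : Fin (n + 1 + 1), (((-1 : ℂ) ^ ((l : ℕ) + 1) *
      (Matrix.of (fun k m => Φ k (f (l.succAbove m)))).det)) •
      (fun i => Φ i (f l))) = (0 : Fin (n + 1) → ℂ) := by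
    funext i
    rw [Finset.sum_apply]
    simp only [Pi.smul_apply, smul_eq_mul]
    have := rowdup i
    calc ∑ l : Fin (n + 1 + 1), ((-1 : ℂ) ^ ((l : ℕ) + 1) *
          (Matrix.of (fun k m => Φ k (f (l.succAbove m)))).det) * Φ i (f l)
        = -∑ l : Fin (n + 1 + 1), (-1 : ℂ) ^ (l : ℕ) * Φ i (f l) *
          (Matrix.of (fun k m => Φ k (f (l.succAbove m)))).det := by
          rw [← Finset.sum_neg_distrib]
          apply Finset.sum_congr rfl
          intro l _
          ring
      _ = 0 := by rw [this]; ring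
  rw [this, map_zero]
  rfl



/-- single-column Plücker relation: for `|A| = N − 1` and
`|B| = N + 1`,
`Σ_{l=1}^{N+1} (−1)^l det(Φ_{(i₁,…,i_{N−1}, j_l)}) det(Φ_{B \ {j_l}}) = 0`,
where `i₁ < ⋯ < i_{N−1}` enumerates `A` and `j₁ < ⋯ < j_{N+1}` enumerates `B`. -/
theorem single_column_plucker {N L : ℕ} (Φ : Matrix (Fin N) (Fin L) ℂ)
    (A B : Finset (Fin L)) (hA : A.card + 1 = N) (hB : B.card = N + 1) :
    ∑ l : Fin (N + 1),
      (-1 : ℂ) ^ ((l : ℕ) + 1) *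
        (listMat Φ (A.sort (· ≤ ·) ++ [(B.orderIsoOfFin hB l : Fin L)])).det *
        (listMat Φ ((B.erase (B.orderIsoOfFin hB l : Fin L)).sort (· ≤ ·))).det
      = 0 := by
  subst hA
  exact aux_plucker Φ A B rfl hB
end
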